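/- Fix η > 0 and let ν^+(λ) = -1 + √(1+λ). There exist C, δ > 0 such that for all λ ∈ B(0,δ) and all x ≤ y ≤ 0, e^{ηx}|e^{ν^+(λ)(x-y)} - 1| ≤ C|λ|. -/

import Mathlib

/-!
Since the principal square root has nonnegative real part, `|√z + 1| ≥ 1`, so
`|√z - 1| ≤ |√z - 1| |√z + 1| = |z - 1|`; hence `|ν⁺(λ)| ≤ |λ|` for every `λ`. With
`|e^w - 1| ≤ |w| e^{|w|}` and `|ν⁺(λ)(x - y)| ≤ |λ| |x| ≤ η |x| / 2` for `|λ| < η / 2`, the weight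
`e^{ηx}` leaves `|λ| |x| e^{ηx/2}`, and `|x| e^{ηx/2} ≤ 2/η`.
-/

/-- Spatial eigenvalue `ν⁺(λ) = -1 + √(1+λ)` of `∂ₓₓ + 2∂ₓ - λ`. -/
noncomputable def nuP (l : ℂ) : ℂ := -1 + (1 + l) ^ ((1:ℂ)/2)

open Complex

lemma norm_cpow_inv_two_sub_one_le (z : ℂ) : ‖z ^ (2⁻¹ : ℂ) - 1‖ ≤ ‖z - 1‖ := by
  set w := z ^ (2⁻¹ : ℂ)
  have hre : 0 ≤ w.re := by rw [cpow_inv_two_re]; positivity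
  have hsq : w ^ 2 = z := cpow_ofNat_inv_pow z 2
  have hw1 : 1 ≤ ‖w + 1‖ := by
    refine le_trans ?_ (re_le_norm _)
    simpa only [add_re, one_re, le_add_iff_nonneg_left] using hre
  calc ‖w - 1‖ ≤ ‖w - 1‖ * ‖w + 1‖ := le_mul_of_one_le_right (norm_nonneg _) hw1
    _ = ‖z - 1‖ := by rw [← norm_mul, ← hsq]; ring_nf

lemma norm_nuP_le (l : ℂ) : ‖nuP l‖ ≤ ‖l‖ := by
  simpa [nuP, one_div, neg_add_eq_sub] using norm_cpow_inv_two_sub_one_le (1 + l)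

lemma norm_exp_sub_one_le_norm_mul_exp (z : ℂ) : ‖exp z - 1‖ ≤ ‖z‖ * Real.exp ‖z‖ := by
  simpa using norm_exp_sub_sum_le_norm_mul_exp z 1

lemma neg_mul_exp_half_mul_le {η : ℝ} (hη : 0 < η) (x : ℝ) :
    -x * Real.exp (η / 2 * x) ≤ 2 / η := by
  have h := Real.le_inv_mul_exp (-x) (half_pos hη)
  calc -x * Real.exp (η / 2 * x)
      ≤ (η / 2)⁻¹ * Real.exp (η / 2 * -x) * Real.exp (η / 2 * x) := by gcongr
    _ = 2 / η := by rw [mul_assoc, ← Real.exp_add]; simp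

theorem stmt_10 (η : ℝ) (hη : 0 < η) :
    ∃ C > (0:ℝ), ∃ δ > (0:ℝ), ∀ l : ℂ, ‖l‖ < δ →
      ∀ x y : ℝ, x ≤ y → y ≤ 0 →
        Real.exp (η * x) * ‖Complex.exp (nuP l * ((x:ℂ) - y)) - 1‖ ≤
          C * ‖l‖ := by
  refine ⟨2 / η, by positivity, η / 2, by positivity, fun l hl x y hxy hy => ?_⟩
  set z := nuP l * ((x:ℂ) - y)
  have hx : 0 ≤ -x := by linarith
  have hzl : ‖z‖ ≤ ‖l‖ * -x := by
    have hxy' : ‖(x:ℂ) - y‖ ≤ -x := by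
      rw [← ofReal_sub, norm_real, Real.norm_of_nonpos (by linarith)]; linarith
    calc ‖z‖ = ‖nuP l‖ * ‖(x:ℂ) - y‖ := norm_mul _ _
      _ ≤ ‖l‖ * -x := by gcongr; exact norm_nuP_le l
  have hz : ‖z‖ ≤ η / 2 * -x := hzl.trans (by gcongr)
  calc Real.exp (η * x) * ‖exp z - 1‖
      ≤ Real.exp (η * x) * (‖l‖ * -x * Real.exp (η / 2 * -x)) := by
        grw [norm_exp_sub_one_le_norm_mul_exp, hzl, hz]
    _ = ‖l‖ * (-x * Real.exp (η / 2 * x)) := by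
        rw [show η / 2 * x = η * x + η / 2 * -x by ring, Real.exp_add]; ring
    _ ≤ ‖l‖ * (2 / η) := by gcongr; exact neg_mul_exp_half_mul_le hη x
    _ = 2 / η * ‖l‖ := mul_comm _ _
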